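/- Let {X_n : n ≥ 1} and {Y_n : n ≥ 1} be two sequences of positive continuous random variables converging in distribution to X and Y respectively, such that X_n and X have a common interval support for all n and lim_{n→∞} E[X_n] = E[X], and analogously Y_n and Y have a common interval support and lim_{n→∞} E[Y_n] = E[Y]. Fix p_0 ∈ (0,1). If X_n ≤_{p_0-tvar-rl} Y_n for all n, then X ≤_{p_0-tvar-rl} Y. -/

import Mathlib

/-!
Under the uniform distribution on `(0, 1)` the quantile function `Q` of a law has that law, so
`E X = ∫₀¹ Q`, and a change of variables gives
`∫_p^1 F_t⁻¹ = (1 - F t)⁻¹ (∫_q^1 Q - (1 - q) t)` with `q = F t + p (1 - F t)`.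
Convergence in distribution to a continuous limit gives `Q_n → Q` off the countable set of levels
at which `F` is flat, and since the `Q_n` are nonnegative with `∫ Q_n = E X_n → E X = ∫ Q`,
Scheffé's lemma upgrades this to `L¹` convergence. Hence both sides of the defining inequality
converge, and the inequality passes to the limit.
-/

open MeasureTheory ProbabilityTheory

/-- The quantile (Value at Risk) of a distribution function `F` at level `p`:
`F^{-1}(p) = inf {x : F x ≥ p}`. -/
noncomputable def quantile (F : ℝ → ℝ) (p : ℝ) : ℝ := sInf {x : ℝ | p ≤ F x}

/-- The distribution function of the residual life `X_t = [X - t ∣ X > t]`: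
`F_t(x) = (F(x+t) - F(t))/(1 - F(t))` for `x ≥ 0`, and `0` otherwise. -/
noncomputable def resCDF (F : ℝ → ℝ) (t : ℝ) (x : ℝ) : ℝ :=
  if 0 ≤ x then (F (x + t) - F t) / (1 - F t) else 0

/-- The quantile function of the residual life `X_t`. -/
noncomputable def resQuantile (F : ℝ → ℝ) (t : ℝ) (p : ℝ) : ℝ :=
  quantile (resCDF F t) p

/-- `X ≤_{p₀-tvar-rl} Y`, expressed through the distribution functions `F` of `X` and `G` of `Y`:
`∫_p^1 F_t^{-1}(u) du ≤ ∫_p^1 G_t^{-1}(u) du` for all `p ∈ [p₀, 1)` and all `t` below the right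
endpoints of the supports of `X` and `Y` (equivalently, `F t < 1` and `G t < 1`). -/
def TvarRlLE (F G : ℝ → ℝ) (p₀ : ℝ) : Prop :=
  ∀ t : ℝ, F t < 1 → G t < 1 → ∀ p ∈ Set.Ico p₀ 1,
    (∫ u in p..1, resQuantile F t u) ≤ ∫ u in p..1, resQuantile G t u

/-- The (topological) support of a measure on `ℝ`: points all of whose neighbourhoods have
positive measure. -/
def msupport (μ : Measure ℝ) : Set ℝ := {x : ℝ | ∀ U ∈ nhds x, 0 < μ U}

open Set Filter Topology

section Quantile

variable {μ : Measure ℝ} {q x : ℝ}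

lemma nonempty_setOf_le_cdf (hq : q < 1) : {x | q ≤ cdf μ x}.Nonempty :=
  ((tendsto_cdf_atTop μ).eventually (eventually_ge_nhds hq)).exists

lemma bddBelow_setOf_le_cdf (hq : 0 < q) : BddBelow {x | q ≤ cdf μ x} := by
  obtain ⟨a, ha⟩ := eventually_atBot.1 ((tendsto_cdf_atBot μ).eventually (eventually_lt_nhds hq))
  exact ⟨a, fun x hx => not_lt.1 fun hxa => (ha x hxa.le).not_ge hx⟩

/-- The infimum defining the quantile is attained because `cdf μ` is right-continuous. -/
lemma le_cdf_quantile_cdf (hq : q ∈ Ioo 0 1) : q ≤ cdf μ (quantile (cdf μ) q) := by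
  set a := quantile (cdf μ) q
  have hright : ∀ x ∈ Ioi a, q ≤ cdf μ x := fun x hx => by
    obtain ⟨y, hy, hyx⟩ := exists_lt_of_csInf_lt (nonempty_setOf_le_cdf hq.2) hx
    exact hy.trans (monotone_cdf μ hyx.le)
  exact ge_of_tendsto (((cdf μ).right_continuous a).mono Ioi_subset_Ici_self)
    (eventually_nhdsWithin_of_forall hright)

lemma quantile_cdf_le_iff (hq : q ∈ Ioo 0 1) : quantile (cdf μ) q ≤ x ↔ q ≤ cdf μ x :=
  ⟨fun h => (le_cdf_quantile_cdf hq).trans (monotone_cdf μ h),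
    fun h => csInf_le (bddBelow_setOf_le_cdf hq.1) h⟩

lemma lt_quantile_cdf_iff (hq : q ∈ Ioo 0 1) : x < quantile (cdf μ) q ↔ cdf μ x < q :=
  not_le.symm.trans ((quantile_cdf_le_iff hq).not.trans not_le)

lemma monotoneOn_quantile_cdf : MonotoneOn (quantile (cdf μ)) (Ioo 0 1) :=
  fun _ hq _ hq' hqq' => (quantile_cdf_le_iff hq).2 (hqq'.trans (le_cdf_quantile_cdf hq'))

lemma aemeasurable_quantile_cdf : AEMeasurable (quantile (cdf μ)) (volume.restrict (Ioo 0 1)) :=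
  aemeasurable_restrict_of_monotoneOn measurableSet_Ioo monotoneOn_quantile_cdf

lemma quantile_cdf_nonneg [IsProbabilityMeasure μ] (hμ : μ (Iic 0) = 0) (hq : q ∈ Ioo 0 1) :
    0 ≤ quantile (cdf μ) q := by
  refine (lt_quantile_cdf_iff hq).2 ?_ |>.le
  rw [cdf_eq_real, measureReal_def, hμ, ENNReal.toReal_zero]
  exact hq.1

end Quantile

section QuantileTransform

variable {μ : Measure ℝ} [IsProbabilityMeasure μ]

theorem map_quantile_cdf : (volume.restrict (Ioo (0 : ℝ) 1)).map (quantile (cdf μ)) = μ := by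
  have : IsFiniteMeasure (volume.restrict (Ioo (0 : ℝ) 1)) :=
    isFiniteMeasure_restrict.2 (by simp)
  refine Measure.ext_of_Iic _ _ fun x => ?_
  have hpre : quantile (cdf μ) ⁻¹' Iic x ∩ Ioo 0 1 = Iic (cdf μ x) ∩ Ioo 0 1 := by
    ext u
    simp only [mem_inter_iff, mem_preimage, mem_Iic, and_congr_left_iff]
    exact quantile_cdf_le_iff
  rw [Measure.map_apply_of_aemeasurable aemeasurable_quantile_cdf measurableSet_Iic,
    Measure.restrict_apply' measurableSet_Ioo, hpre,
    measure_congr (ae_eq_refl _ |>.inter Ioo_ae_eq_Ioc), inter_comm, Ioc_inter_Iic,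
    min_eq_right (cdf_le_one μ x), Real.volume_Ioc, sub_zero, ofReal_cdf]

noncomputable def quantileFun (μ : Measure ℝ) : ℝ → ℝ := (Ioo 0 1).indicator (quantile (cdf μ))

lemma quantileFun_nonneg (hμ : μ (Iic 0) = 0) (u : ℝ) : 0 ≤ quantileFun μ u :=
  indicator_nonneg (fun _ hu => quantile_cdf_nonneg hμ hu) u

lemma integrable_quantileFun (hμ : Integrable id μ) : Integrable (quantileFun μ) := by
  rw [quantileFun, integrable_indicator_iff measurableSet_Ioo]
  rw [← map_quantile_cdf (μ := μ)] at hμ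
  exact (integrable_map_measure aestronglyMeasurable_id aemeasurable_quantile_cdf).1 hμ

lemma integral_quantileFun : ∫ u, quantileFun μ u = ∫ x, x ∂μ := by
  rw [quantileFun, integral_indicator measurableSet_Ioo]
  conv_rhs => rw [← map_quantile_cdf (μ := μ)]
  exact (integral_map aemeasurable_quantile_cdf aestronglyMeasurable_id).symm

end QuantileTransform

section QuantileConvergence

variable {μn : ℕ → Measure ℝ} {μ : Measure ℝ}

lemma tendsto_quantile_cdf (hμn : ∀ x, Tendsto (fun n => cdf (μn n) x) atTop (𝓝 (cdf μ x)))
    {u : ℝ} (hu : u ∈ Ioo 0 1) (hflat : ∀ ε > 0, u < cdf μ (quantile (cdf μ) u + ε)) :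
    Tendsto (fun n => quantile (cdf (μn n)) u) atTop (𝓝 (quantile (cdf μ) u)) := by
  refine tendsto_order.2 ⟨fun a ha => ?_, fun b hb => ?_⟩
  · filter_upwards [(hμn a).eventually (gt_mem_nhds ((lt_quantile_cdf_iff hu).1 ha))] with n hn
    exact (lt_quantile_cdf_iff hu).2 hn
  · set c := (quantile (cdf μ) u + b) / 2 with hc_def
    have hc : u < cdf μ c := by
      convert hflat ((b - quantile (cdf μ) u) / 2) (by linarith) using 2
      ring
    filter_upwards [(hμn c).eventually (lt_mem_nhds hc)] with n hn
    exact ((quantile_cdf_le_iff hu).2 hn.le).trans_lt (by rw [hc_def]; linarith)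

/-- On a flat piece of `cdf μ` starting at the `u`-quantile, `cdf μ` takes the value `u` at a
rational point. -/
lemma countable_setOf_cdf_flat :
    {u | u ∈ Ioo (0 : ℝ) 1 ∧ ∃ ε > 0, cdf μ (quantile (cdf μ) u + ε) ≤ u}.Countable := by
  refine (countable_range fun r : ℚ => cdf μ r).mono ?_
  rintro u ⟨hu, ε, hε, hle⟩
  obtain ⟨r, hr, hrε⟩ := exists_rat_btwn (lt_add_of_pos_right (quantile (cdf μ) u) hε)
  have hQ := le_cdf_quantile_cdf (μ := μ) hu
  exact ⟨r, le_antisymm ((monotone_cdf μ hrε.le).trans hle) (hQ.trans (monotone_cdf μ hr.le))⟩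

lemma ae_tendsto_quantileFun
    (hμn : ∀ x, Tendsto (fun n => cdf (μn n) x) atTop (𝓝 (cdf μ x))) :
    ∀ᵐ u, Tendsto (fun n => quantileFun (μn n) u) atTop (𝓝 (quantileFun μ u)) := by
  filter_upwards [countable_setOf_cdf_flat.ae_notMem volume] with u hu
  by_cases hu01 : u ∈ Ioo (0 : ℝ) 1
  · simp only [quantileFun, indicator_of_mem hu01]
    exact tendsto_quantile_cdf hμn hu01 fun ε hε => not_le.1 fun h => hu ⟨hu01, ε, hε, h⟩
  · simp only [quantileFun, indicator_of_notMem hu01, tendsto_const_nhds]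

end QuantileConvergence

/-- Scheffé's lemma: `|f - g| = f + g - 2 min f g`, and `min (f n) g → g` by dominated
convergence with bound `|g|`. -/
theorem tendsto_integral_abs_sub_of_tendsto_integral {α : Type*} [MeasurableSpace α]
    {ρ : Measure α} {f : ℕ → α → ℝ} {g : α → ℝ} (hf : ∀ n, Integrable (f n) ρ)
    (hg : Integrable g ρ) (hf0 : ∀ n, 0 ≤ᵐ[ρ] f n)
    (hfg : ∀ᵐ x ∂ρ, Tendsto (fun n => f n x) atTop (𝓝 (g x)))
    (hint : Tendsto (fun n => ∫ x, f n x ∂ρ) atTop (𝓝 (∫ x, g x ∂ρ))) :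
    Tendsto (fun n => ∫ x, |f n x - g x| ∂ρ) atTop (𝓝 0) := by
  have hmin : ∀ n, Integrable (fun x => min (f n x) (g x)) ρ := fun n => (hf n).inf hg
  have hmin_lim : Tendsto (fun n => ∫ x, min (f n x) (g x) ∂ρ) atTop (𝓝 (∫ x, g x ∂ρ)) := by
    refine tendsto_integral_of_dominated_convergence (fun x => |g x|)
      (fun n => (hmin n).aestronglyMeasurable) hg.abs (fun n => ?_) ?_
    · filter_upwards [hf0 n] with x hx
      rw [Real.norm_eq_abs, abs_le]
      exact ⟨le_min (by linarith [abs_nonneg (g x), show 0 ≤ f n x from hx]) (neg_abs_le _),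
        (min_le_right _ _).trans (le_abs_self _)⟩
    · filter_upwards [hfg] with x hx
      simpa using hx.min (tendsto_const_nhds (x := g x))
  have heq : ∀ n, ∫ x, |f n x - g x| ∂ρ
      = (∫ x, f n x ∂ρ) + (∫ x, g x ∂ρ) - 2 * ∫ x, min (f n x) (g x) ∂ρ := fun n => by
    have hadd : Integrable (fun x => f n x + g x) ρ := (hf n).add hg
    have habs : (fun x => |f n x - g x|) = fun x => f n x + g x - 2 * min (f n x) (g x) := by
      ext x
      linarith [max_sub_min_eq_abs' (f n x) (g x), min_add_max (f n x) (g x)]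
    rw [habs, integral_sub hadd ((hmin n).const_mul 2), integral_add (hf n) hg,
      integral_const_mul]
  simp only [heq]
  convert (hint.add_const (∫ x, g x ∂ρ)).sub (hmin_lim.const_mul 2) using 2
  ring

theorem tendsto_intervalIntegral_of_tendsto_integral_abs_sub {f : ℕ → ℝ → ℝ} {g : ℝ → ℝ}
    (hf : ∀ n, Integrable (f n)) (hg : Integrable g)
    (hfg : Tendsto (fun n => ∫ x, |f n x - g x|) atTop (𝓝 0))
    {a : ℕ → ℝ} {a₀ : ℝ} (ha : Tendsto a atTop (𝓝 a₀)) (b : ℝ) :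
    Tendsto (fun n => ∫ x in a n..b, f n x) atTop (𝓝 (∫ x in a₀..b, g x)) := by
  have hsplit : ∀ n, ∫ x in a n..b, f n x
      = (∫ x in a n..b, g x) + ∫ x in a n..b, (f n x - g x) := fun n => by
    rw [intervalIntegral.integral_sub (hf n).intervalIntegrable hg.intervalIntegrable]
    ring
  have hprim : Continuous fun c => ∫ x in c..b, g x := by
    simp_rw [intervalIntegral.integral_symm b]
    exact (hg.continuous_primitive b).neg
  have hdiff : ∀ n, |∫ x in a n..b, (f n x - g x)| ≤ ∫ x, |f n x - g x| := fun n =>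
    intervalIntegral.norm_integral_le_integral_norm_uIoc.trans
      (setIntegral_le_integral ((hf n).sub hg).norm (ae_of_all _ fun _ => norm_nonneg _))
  simp_rw [hsplit]
  simpa using ((hprim.tendsto a₀).comp ha).add (squeeze_zero_norm hdiff hfg)

lemma add_mul_one_sub_mem_Ioo {c u : ℝ} (hc : c ∈ Ico 0 1) (hu : u ∈ Ioo 0 1) :
    c + u * (1 - c) ∈ Ioo 0 1 := by
  obtain ⟨hc0, hc1⟩ := hc
  obtain ⟨hu0, hu1⟩ := hu
  constructor <;> nlinarith

section ResidualLife

variable {μ : Measure ℝ} {t : ℝ}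

lemma resQuantile_cdf_eq (ht : cdf μ t < 1) {u : ℝ} (hu : u ∈ Ioo 0 1) :
    resQuantile (cdf μ) t u = quantile (cdf μ) (cdf μ t + u * (1 - cdf μ t)) - t := by
  set q := cdf μ t + u * (1 - cdf μ t)
  have hq : q ∈ Ioo 0 1 := add_mul_one_sub_mem_Ioo ⟨cdf_nonneg μ t, ht⟩ hu
  have htQ : t < quantile (cdf μ) q := (lt_quantile_cdf_iff hq).2 (by nlinarith [hu.1])
  suffices {x | u ≤ resCDF (cdf μ) t x} = Ici (quantile (cdf μ) q - t) by
    rw [resQuantile, quantile, this, csInf_Ici]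
  ext x
  simp only [mem_ofPred_eq, mem_Ici, resCDF]
  split_ifs with hx
  · rw [le_div_iff₀ (sub_pos.2 ht), sub_le_iff_le_add, quantile_cdf_le_iff hq]
    constructor <;> intro h <;> linarith
  · constructor <;> intro h <;> linarith [hu.1]

lemma integral_resQuantile_cdf [IsProbabilityMeasure μ] (hμ : Integrable id μ) (ht : cdf μ t < 1)
    {p : ℝ} (hp : p ∈ Icc 0 1) :
    ∫ u in p..1, resQuantile (cdf μ) t u
      = (1 - cdf μ t)⁻¹ * ((∫ v in cdf μ t + p * (1 - cdf μ t)..1, quantileFun μ v)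
        - (1 - (cdf μ t + p * (1 - cdf μ t))) * t) := by
  set c := cdf μ t
  have hd : 1 - c ≠ 0 := sub_ne_zero.2 ht.ne'
  have hres : ∫ u in p..1, resQuantile (cdf μ) t u
      = ∫ u in p..1, (quantileFun μ ((1 - c) * u + c) - t) := by
    refine intervalIntegral.integral_congr_ae ?_
    filter_upwards [(countable_singleton (1 : ℝ)).ae_notMem volume] with u hu1 hu
    rw [uIoc_of_le hp.2] at hu
    have hu' : u ∈ Ioo 0 1 := ⟨hp.1.trans_lt hu.1, hu.2.lt_of_ne hu1⟩
    have hmem := add_mul_one_sub_mem_Ioo ⟨cdf_nonneg μ t, ht⟩ hu'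
    rw [resQuantile_cdf_eq ht hu', show (1 - c) * u + c = c + u * (1 - c) by ring, quantileFun,
      indicator_of_mem hmem]
  rw [hres, intervalIntegral.integral_comp_mul_add (fun v => quantileFun μ v - t) hd,
    intervalIntegral.integral_sub (integrable_quantileFun hμ).intervalIntegrable
      intervalIntegrable_const, intervalIntegral.integral_const, smul_eq_mul, smul_eq_mul]
  congr 3 <;> ring

end ResidualLife

theorem tendsto_integral_resQuantile_cdf {μn : ℕ → Measure ℝ} {μ : Measure ℝ}
    [∀ n, IsProbabilityMeasure (μn n)] [IsProbabilityMeasure μ]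
    (hpos : ∀ n, μn n (Iic 0) = 0)
    (hμn : ∀ x, Tendsto (fun n => cdf (μn n) x) atTop (𝓝 (cdf μ x)))
    (hintn : ∀ n, Integrable id (μn n)) (hint : Integrable id μ)
    (hmean : Tendsto (fun n => ∫ x, x ∂μn n) atTop (𝓝 (∫ x, x ∂μ)))
    {t p : ℝ} (ht : cdf μ t < 1) (hp : p ∈ Icc 0 1) :
    Tendsto (fun n => ∫ u in p..1, resQuantile (cdf (μn n)) t u) atTop
      (𝓝 (∫ u in p..1, resQuantile (cdf μ) t u)) := by
  have hL1 := tendsto_integral_abs_sub_of_tendsto_integral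
    (fun n => integrable_quantileFun (hintn n)) (integrable_quantileFun hint)
    (fun n => ae_of_all _ (quantileFun_nonneg (hpos n))) (ae_tendsto_quantileFun hμn)
    (by simpa only [integral_quantileFun] using hmean)
  have hct := hμn t
  have hq := hct.add ((hct.const_sub 1).const_mul p)
  have htail := tendsto_intervalIntegral_of_tendsto_integral_abs_sub
    (fun n => integrable_quantileFun (hintn n)) (integrable_quantileFun hint) hL1 hq 1
  rw [integral_resQuantile_cdf hint ht hp]
  refine Tendsto.congr' ?_ (((hct.const_sub 1).inv₀ (sub_ne_zero.2 ht.ne')).mul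
    (htail.sub ((hq.const_sub 1).mul_const t)))
  filter_upwards [hct.eventually (gt_mem_nhds ht)] with n hn
  rw [integral_resQuantile_cdf (hintn n) hn hp]

theorem stmt2_general (μn νn : ℕ → Measure ℝ) (μ ν : Measure ℝ)
    [∀ n, IsProbabilityMeasure (μn n)] [∀ n, IsProbabilityMeasure (νn n)]
    [IsProbabilityMeasure μ] [IsProbabilityMeasure ν]
    -- positivity of the random variables
    (hposXn : ∀ n, (μn n) (Set.Iic 0) = 0)
    (hposYn : ∀ n, (νn n) (Set.Iic 0) = 0)
    -- continuity of the random variables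
    (hcX : Continuous fun x => cdf μ x)
    (hcY : Continuous fun x => cdf ν x)
    -- convergence in distribution
    (hdX : ∀ x : ℝ, ContinuousAt (fun y => cdf μ y) x →
      Filter.Tendsto (fun n => cdf (μn n) x) Filter.atTop (nhds (cdf μ x)))
    (hdY : ∀ x : ℝ, ContinuousAt (fun y => cdf ν y) x →
      Filter.Tendsto (fun n => cdf (νn n) x) Filter.atTop (nhds (cdf ν x)))
    -- finite means and convergence of the means
    (hmXn : ∀ n, Integrable id (μn n)) (hmX : Integrable id μ)
    (hmYn : ∀ n, Integrable id (νn n)) (hmY : Integrable id ν)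
    (htX : Filter.Tendsto (fun n => ∫ x, x ∂(μn n)) Filter.atTop (nhds (∫ x, x ∂μ)))
    (htY : Filter.Tendsto (fun n => ∫ x, x ∂(νn n)) Filter.atTop (nhds (∫ x, x ∂ν)))
    (p₀ : ℝ) (hp₀ : p₀ ∈ Set.Ioo (0 : ℝ) 1)
    (hord : ∀ n, TvarRlLE (fun x => cdf (μn n) x) (fun x => cdf (νn n) x) p₀) :
    TvarRlLE (fun x => cdf μ x) (fun x => cdf ν x) p₀ := by
  intro t htX' htY' p hp
  have hp' : p ∈ Icc 0 1 := ⟨hp₀.1.le.trans hp.1, hp.2.le⟩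
  have hdX' : ∀ x, Tendsto (fun n => cdf (μn n) x) atTop (𝓝 (cdf μ x)) :=
    fun x => hdX x hcX.continuousAt
  have hdY' : ∀ x, Tendsto (fun n => cdf (νn n) x) atTop (𝓝 (cdf ν x)) :=
    fun x => hdY x hcY.continuousAt
  refine le_of_tendsto_of_tendsto
    (tendsto_integral_resQuantile_cdf hposXn hdX' hmXn hmX htX htX' hp')
    (tendsto_integral_resQuantile_cdf hposYn hdY' hmYn hmY htY htY' hp') ?_
  filter_upwards [(hdX' t).eventually (gt_mem_nhds htX'), (hdY' t).eventually (gt_mem_nhds htY')]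
    with n hμn hνn
  exact hord n t hμn hνn p hp

/-- Closure of the `p₀-tvar-rl` order under convergence in distribution: if `Xₙ → X` and
`Yₙ → Y` in distribution, the random variables are positive and continuous, `Xₙ` and `X`
(resp. `Yₙ` and `Y`) have a common interval support, the means converge, and
`Xₙ ≤_{p₀-tvar-rl} Yₙ` for all `n`, then `X ≤_{p₀-tvar-rl} Y`. -/
theorem stmt2 (μn νn : ℕ → Measure ℝ) (μ ν : Measure ℝ)
    [∀ n, IsProbabilityMeasure (μn n)] [∀ n, IsProbabilityMeasure (νn n)]
    [IsProbabilityMeasure μ] [IsProbabilityMeasure ν]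
    -- positivity of the random variables
    (hposXn : ∀ n, (μn n) (Set.Iic 0) = 0) (hposX : μ (Set.Iic 0) = 0)
    (hposYn : ∀ n, (νn n) (Set.Iic 0) = 0) (hposY : ν (Set.Iic 0) = 0)
    -- continuity of the random variables
    (hcXn : ∀ n, Continuous fun x => cdf (μn n) x) (hcX : Continuous fun x => cdf μ x)
    (hcYn : ∀ n, Continuous fun x => cdf (νn n) x) (hcY : Continuous fun x => cdf ν x)
    -- convergence in distribution
    (hdX : ∀ x : ℝ, ContinuousAt (fun y => cdf μ y) x →
      Filter.Tendsto (fun n => cdf (μn n) x) Filter.atTop (nhds (cdf μ x)))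
    (hdY : ∀ x : ℝ, ContinuousAt (fun y => cdf ν y) x →
      Filter.Tendsto (fun n => cdf (νn n) x) Filter.atTop (nhds (cdf ν x)))
    -- common interval supports
    (hsX : ∀ n, msupport (μn n) = msupport μ) (hiX : (msupport μ).OrdConnected)
    (hsY : ∀ n, msupport (νn n) = msupport ν) (hiY : (msupport ν).OrdConnected)
    -- finite means and convergence of the means
    (hmXn : ∀ n, Integrable id (μn n)) (hmX : Integrable id μ)
    (hmYn : ∀ n, Integrable id (νn n)) (hmY : Integrable id ν)
    (htX : Filter.Tendsto (fun n => ∫ x, x ∂(μn n)) Filter.atTop (nhds (∫ x, x ∂μ)))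
    (htY : Filter.Tendsto (fun n => ∫ x, x ∂(νn n)) Filter.atTop (nhds (∫ x, x ∂ν)))
    (p₀ : ℝ) (hp₀ : p₀ ∈ Set.Ioo (0 : ℝ) 1)
    (hord : ∀ n, TvarRlLE (fun x => cdf (μn n) x) (fun x => cdf (νn n) x) p₀) :
    TvarRlLE (fun x => cdf μ x) (fun x => cdf ν x) p₀ :=
  stmt2_general μn νn μ ν hposXn hposYn hcX hcY hdX hdY hmXn hmX hmYn hmY htX htY p₀ hp₀ hord
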